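/- arXiv:2501.08757 — 7 statements merged into one kernel-verified Lean document; each statement's English description precedes it below -/
import Mathlib

section
/- (Reactivity, Case 1: strong chemotaxis.) Assume f_u + g_v < 0, f_u·g_v − f_v·g_u > 0, and β²·ℓ0² > 4·D_u·D_v. Then there exists K ≥ 0 such that for every k with k² > K, the matrix J_k = J_0 − k²·L is reactive, i.e. its symmetric part H(J_k) = (J_k + J_kᵀ)/2 has a positive eigenvalue. -/
open Matrix

/-- The symmetric (Hermitian) part of a real 2×2 matrix. -/
noncomputable def symPart (M : Matrix (Fin 2) (Fin 2) ℝ) : Matrix (Fin 2) (Fin 2) ℝ :=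
  (1 / 2 : ℝ) • (M + Mᵀ)

/-- A real 2×2 matrix is reactive if its symmetric part has a positive (real) eigenvalue. -/
def IsReactive (M : Matrix (Fin 2) (Fin 2) ℝ) : Prop :=
  ∃ μ : ℝ, 0 < μ ∧ ∃ v : Fin 2 → ℝ, v ≠ 0 ∧ (symPart M).mulVec v = μ • v

/-- The linearized operator `J_k = J₀ − k²·L` of the reaction–diffusion–chemotaxis system. -/
noncomputable def Jk (fu fv gu gv Du Dv β ℓ0 k : ℝ) : Matrix (Fin 2) (Fin 2) ℝ :=
  !![fu, fv; gu, gv] - k ^ 2 • !![Du, -β * ℓ0; 0, Dv]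

/-- A symmetric 2×2 real matrix with negative determinant has a positive eigenvalue. -/
lemma sym2_pos_eig (a b c : ℝ) (h : a * c - b ^ 2 < 0) :
    ∃ μ : ℝ, 0 < μ ∧ ∃ v : Fin 2 → ℝ, v ≠ 0 ∧ (!![a, b; b, c]).mulVec v = μ • v := by
  by_cases hb : b = 0
  · subst hb
    by_cases ha : 0 < a
    · refine ⟨a, ha, ![1, 0], ?_, ?_⟩
      · intro hv
        have := congrFun hv 0
        simp at this
      · funext i
        fin_cases i <;> simp [Matrix.mulVec, dotProduct, Fin.sum_univ_two]
    · have hc : 0 < c := by nlinarith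
      refine ⟨c, hc, ![0, 1], ?_, ?_⟩
      · intro hv
        have := congrFun hv 1
        simp at this
      · funext i
        fin_cases i <;> simp [Matrix.mulVec, dotProduct, Fin.sum_univ_two]
  · set s := Real.sqrt ((a - c) ^ 2 + 4 * b ^ 2) with hs_def
    have hs_nonneg : 0 ≤ s := Real.sqrt_nonneg _
    have hs_sq : s ^ 2 = (a - c) ^ 2 + 4 * b ^ 2 := Real.sq_sqrt (by positivity)
    set μ := ((a + c) + s) / 2 with hμ_def
    have hμpos : 0 < μ := by
      have h1 : (a + c) ^ 2 < s ^ 2 := by nlinarith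
      have h2 : -(a + c) < s := by nlinarith [sq_nonneg (s + (a + c))]
      simp only [hμ_def]
      linarith
    have hquad : μ ^ 2 - (a + c) * μ + (a * c - b ^ 2) = 0 := by
      simp only [hμ_def]
      nlinarith [hs_sq]
    refine ⟨μ, hμpos, ![b, μ - a], ?_, ?_⟩
    · intro hv
      have := congrFun hv 0
      simp at this
      exact hb this
    · funext i
      fin_cases i <;>
        simp [Matrix.mulVec, dotProduct, Fin.sum_univ_two] <;> nlinarith [hquad]

/-- Case 1 (strong chemotaxis): if `β²ℓ0² > 4·Du·Dv` then `J_k` is reactive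
for all sufficiently large wavenumbers `k`. -/
theorem reactive_case1_strong_chemotaxis
    (fu fv gu gv Du Dv β ℓ0 : ℝ) (hDu : 0 < Du) (hDv : 0 < Dv)
    (htr : fu + gv < 0) (hdet : fu * gv - fv * gu > 0)
    (hchem : β ^ 2 * ℓ0 ^ 2 > 4 * Du * Dv) :
    ∃ K : ℝ, 0 ≤ K ∧ ∀ k : ℝ, k ^ 2 > K → IsReactive (Jk fu fv gu gv Du Dv β ℓ0 k) := by
  set A : ℝ := β ^ 2 * ℓ0 ^ 2 / 4 - Du * Dv with hA_def
  have hA : 0 < A := by simp only [hA_def]; linarith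
  set B : ℝ := fu * Dv + Du * gv + (fv + gu) * β * ℓ0 / 2 with hB_def
  set C : ℝ := fu * gv - (fv + gu) ^ 2 / 4 with hC_def
  refine ⟨max 1 ((|B| + |C| + 1) / A), le_trans zero_le_one (le_max_left _ _), ?_⟩
  intro k hk
  set x := k ^ 2 with hx_def
  have hx1 : 1 < x := lt_of_le_of_lt (le_max_left _ _) hk
  have hx2 : |B| + |C| + 1 < A * x := by
    have := lt_of_le_of_lt (le_max_right 1 ((|B| + |C| + 1) / A)) hk
    calc |B| + |C| + 1 = (|B| + |C| + 1) / A * A := by field_simp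
    _ < x * A := by exact mul_lt_mul_of_pos_right this hA
    _ = A * x := by ring
  -- the symmetric part entries
  set a : ℝ := fu - x * Du with ha_def
  set c : ℝ := gv - x * Dv with hc_def
  set b : ℝ := (fv + gu + x * (β * ℓ0)) / 2 with hb_def
  have hSym : symPart (Jk fu fv gu gv Du Dv β ℓ0 k) = !![a, b; b, c] := by
    funext i j
    fin_cases i <;> fin_cases j <;>
      simp [symPart, Jk, ha_def, hb_def, hc_def, Matrix.sub_apply, Matrix.add_apply,
        Matrix.smul_apply, Matrix.transpose_apply, Matrix.of_apply, Matrix.cons_val',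
        Matrix.cons_val_zero, Matrix.cons_val_one, Matrix.head_cons, Matrix.head_fin_const,
        Matrix.vecHead, Matrix.vecTail, smul_eq_mul] <;> ring
  have hneg : a * c - b ^ 2 < 0 := by
    have hexp : a * c - b ^ 2 = -(A * x ^ 2 + B * x - C) := by
      simp only [ha_def, hb_def, hc_def, hA_def, hB_def, hC_def]; ring
    rw [hexp]
    have h1 : A * x - |B| > |C| + 1 := by linarith
    have h2 : x * (A * x - |B|) > x * (|C| + 1) := by
      apply mul_lt_mul_of_pos_left h1 (by linarith)
    have h3 : x * (|C| + 1) > |C| + 1 := by nlinarith [abs_nonneg C]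
    nlinarith [le_abs_self B, neg_abs_le B, le_abs_self C, neg_abs_le C]
  obtain ⟨μ, hμ, v, hv, hmv⟩ := sym2_pos_eig a b c hneg
  exact ⟨μ, hμ, v, hv, by rw [hSym]; exact hmv⟩
end

section
/- (Reactivity, Case 2: moderate chemotaxis with reactive kinetics.) Assume f_u + g_v < 0, f_u·g_v − f_v·g_u > 0, β²·ℓ0² ≤ 4·D_u·D_v, and (f_v + g_u)² > 4·f_u·g_v (i.e. J_0 is reactive). Then there exists k > 0 such that the matrix J_k = J_0 − k²·L is reactive, i.e. its symmetric part H(J_k) = (J_k + J_kᵀ)/2 has a positive eigenvalue. -/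
open Matrix

/-- A symmetric 2×2 matrix with negative determinant has a positive eigenvalue. -/
lemma sym_pos_eig_of_det_neg (a b d : ℝ) (h : a * d - b ^ 2 < 0) :
    ∃ μ : ℝ, 0 < μ ∧ ∃ v : Fin 2 → ℝ, v ≠ 0 ∧
      (!![a, b; b, d] : Matrix (Fin 2) (Fin 2) ℝ).mulVec v = μ • v := by
  set s : ℝ := ((a - d) / 2) ^ 2 + b ^ 2 with hs
  have hs0 : (0:ℝ) ≤ s := by positivity
  set μ : ℝ := (a + d) / 2 + Real.sqrt s with hμ
  have hsq : Real.sqrt s ^ 2 = s := Real.sq_sqrt hs0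
  have habs : |(a + d) / 2| < Real.sqrt s := by
    rw [← Real.sqrt_sq_eq_abs]
    apply Real.sqrt_lt_sqrt (by positivity)
    nlinarith
  have hμpos : 0 < μ := by
    have := neg_abs_le ((a + d) / 2)
    rw [hμ]; linarith
  have hsq2 : (μ - (a + d) / 2) ^ 2 = s := by
    have : μ - (a + d) / 2 = Real.sqrt s := by rw [hμ]; ring
    rw [this, hsq]
  rw [hs] at hsq2
  clear_value s μ
  have hchar : μ ^ 2 - (a + d) * μ + (a * d - b ^ 2) = 0 := by nlinarith [hsq2]
  by_cases hb : b = 0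
  · subst hb
    have had : a * d < 0 := by nlinarith
    rcases lt_or_ge a 0 with ha | ha
    · have hd : 0 < d := by nlinarith
      refine ⟨d, hd, ![0, 1], ?_, ?_⟩
      · intro hv; have := congrFun hv 1; simp at this
      · ext i; fin_cases i <;>
          simp [Matrix.mulVec, dotProduct, Fin.sum_univ_two]
    · have ha' : 0 < a := by
        rcases ha.eq_or_lt with h' | h'
        · exfalso; rw [← h'] at had; simp at had
        · exact h'
      refine ⟨a, ha', ![1, 0], ?_, ?_⟩
      · intro hv; have := congrFun hv 0; simp at this
      · ext i; fin_cases i <;>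
          simp [Matrix.mulVec, dotProduct, Fin.sum_univ_two]
  · refine ⟨μ, hμpos, ![b, μ - a], ?_, ?_⟩
    · intro hv; have := congrFun hv 0; simp at this; exact hb this
    · ext i; fin_cases i <;>
        simp [Matrix.mulVec, dotProduct, Fin.sum_univ_two] <;> nlinarith [hchar]

/-- Case 2 (moderate chemotaxis with reactive kinetics): if `β²ℓ0² ≤ 4·Du·Dv`
and `J₀` is reactive (`(fv+gu)² > 4·fu·gv`), then `J_k` is reactive for some `k > 0`. -/
theorem reactive_case2_moderate_chemotaxis
    (fu fv gu gv Du Dv β ℓ0 : ℝ) (hDu : 0 < Du) (hDv : 0 < Dv)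
    (htr : fu + gv < 0) (hdet : fu * gv - fv * gu > 0)
    (hchem : β ^ 2 * ℓ0 ^ 2 ≤ 4 * Du * Dv)
    (hreact0 : (fv + gu) ^ 2 > 4 * (fu * gv)) :
    ∃ k : ℝ, 0 < k ∧ IsReactive (Jk fu fv gu gv Du Dv β ℓ0 k) := by
  -- the determinant of the symmetric part of J_k as a function of t = k²
  set p : ℝ → ℝ := fun t =>
    (fu - t * Du) * (gv - t * Dv) - ((fv + gu + t * (β * ℓ0)) / 2) ^ 2 with hp
  have hcont : Continuous p := by fun_prop
  have hp0 : p 0 < 0 := by simp only [hp]; nlinarith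
  have hev : ∀ᶠ t in nhdsWithin 0 (Set.Ioi (0:ℝ)), p t < 0 :=
    ((hcont.continuousAt.eventually_lt_const hp0).filter_mono nhdsWithin_le_nhds)
  obtain ⟨t, hpt, ht⟩ := (hev.and self_mem_nhdsWithin).exists
  have ht0 : (0:ℝ) < t := ht
  refine ⟨Real.sqrt t, Real.sqrt_pos.mpr ht0, ?_⟩
  have hk2 : Real.sqrt t ^ 2 = t := Real.sq_sqrt ht0.le
  set a := fu - t * Du
  set b := (fv + gu + t * (β * ℓ0)) / 2
  set d := gv - t * Dv
  have hsym : symPart (Jk fu fv gu gv Du Dv β ℓ0 (Real.sqrt t)) = !![a, b; b, d] := by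
    ext i j
    fin_cases i <;> fin_cases j <;>
      simp [symPart, Jk, Matrix.add_apply, Matrix.sub_apply, Matrix.smul_apply, Matrix.transpose_apply, Matrix.of_apply, Matrix.cons_val_zero, Matrix.cons_val_one, Matrix.head_cons, Matrix.head_fin_const, Matrix.vecHead, Matrix.vecTail, Function.comp, smul_eq_mul, hk2, a, b, d] <;> ring
  obtain ⟨μ, hμ, v, hv, hmv⟩ := sym_pos_eig_of_det_neg a b d hpt
  exact ⟨μ, hμ, v, hv, by rw [hsym]; exact hmv⟩
end

section
/- (Chemotaxis–diffusion-driven instability.) Assume f_u + g_v < 0, f_u·g_v − f_v·g_u > 0, and D_u·g_v + D_v·f_u + β·g_u·ℓ0 > 2·√(D_u·D_v·(f_u·g_v − f_v·g_u)). Then there exists k > 0 such that the matrix J_k = J_0 − k²·L has a real eigenvalue λ > 0 (equivalently, h(k²) < 0 for some k² > 0). -/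
open Matrix

/-- A real 2×2 matrix with negative determinant has a positive real eigenvalue. -/
lemma eig_of_negdet (a b c d : ℝ) (hD : a * d - b * c < 0) :
    ∃ lam : ℝ, 0 < lam ∧ ∃ v : Fin 2 → ℝ, v ≠ 0 ∧
      (!![a, b; c, d] : Matrix (Fin 2) (Fin 2) ℝ).mulVec v = lam • v := by
  obtain ⟨s, hs0, hs2⟩ : ∃ s : ℝ, 0 ≤ s ∧ s ^ 2 = (a + d) ^ 2 - 4 * (a * d - b * c) :=
    ⟨Real.sqrt ((a + d) ^ 2 - 4 * (a * d - b * c)), Real.sqrt_nonneg _,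
      Real.sq_sqrt (by nlinarith [sq_nonneg (a + d)])⟩
  refine ⟨(a + d + s) / 2, ?_, ?_⟩
  · have habs : |a + d| < s := by
      have h1 : (a + d) ^ 2 < s ^ 2 := by nlinarith
      nlinarith [abs_nonneg (a + d), sq_abs (a + d)]
    have := neg_abs_le (a + d)
    linarith
  · set lam : ℝ := (a + d + s) / 2 with hlamdef
    have hlam : 0 < lam := by
      have habs : |a + d| < s := by
        have h1 : (a + d) ^ 2 < s ^ 2 := by nlinarith
        nlinarith [abs_nonneg (a + d), sq_abs (a + d)]
      have := neg_abs_le (a + d)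
      rw [hlamdef]; linarith
    have hquad : lam ^ 2 - (a + d) * lam + (a * d - b * c) = 0 := by
      have h : (2 * lam - (a + d)) ^ 2 = s ^ 2 := by rw [hlamdef]; ring
      nlinarith [h, hs2]
    by_cases h1 : b = 0 ∧ lam = a
    · refine ⟨![lam - d, c], ?_, ?_⟩
      · intro hv
        have h1' : lam - d = 0 := congrFun hv 0
        have h2' : c = 0 := congrFun hv 1
        have : a * d - b * c = lam ^ 2 := by
          rw [h1.1, h2']; nlinarith [h1', h1.2]
        nlinarith [hlam]
      · funext i
        fin_cases i <;>
          simp [Matrix.mulVec, dotProduct, Fin.sum_univ_two] <;> nlinarith [hquad]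
    · refine ⟨![b, lam - a], ?_, ?_⟩
      · intro hv
        have h1' : b = 0 := congrFun hv 0
        have h2' : lam - a = 0 := congrFun hv 1
        exact h1 ⟨h1', by linarith⟩
      · funext i
        fin_cases i <;>
          simp [Matrix.mulVec, dotProduct, Fin.sum_univ_two] <;> nlinarith [hquad]

/-- Chemotaxis–diffusion-driven instability: under the stability conditions for the
kinetics and the instability condition on the transport terms, `J_k` has a positive
real eigenvalue for some `k > 0`. -/
theorem chemotaxis_diffusion_instability
    (fu fv gu gv Du Dv β ℓ0 : ℝ) (hDu : 0 < Du) (hDv : 0 < Dv)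
    (htr : fu + gv < 0) (hdet : fu * gv - fv * gu > 0)
    (hinst : Du * gv + Dv * fu + β * gu * ℓ0 >
      2 * Real.sqrt (Du * Dv * (fu * gv - fv * gu))) :
    ∃ k : ℝ, 0 < k ∧ ∃ lam : ℝ, 0 < lam ∧ ∃ v : Fin 2 → ℝ, v ≠ 0 ∧
      (Jk fu fv gu gv Du Dv β ℓ0 k).mulVec v = lam • v := by
  have hsqrt_nonneg : 0 ≤ Real.sqrt (Du * Dv * (fu * gv - fv * gu)) := Real.sqrt_nonneg _
  have hB : 0 < Du * gv + Dv * fu + β * gu * ℓ0 := lt_of_le_of_lt (by positivity) hinst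
  have hsq : Real.sqrt (Du * Dv * (fu * gv - fv * gu)) ^ 2
      = Du * Dv * (fu * gv - fv * gu) := Real.sq_sqrt (by positivity)
  have hB2 : (Du * gv + Dv * fu + β * gu * ℓ0) ^ 2
      > 4 * (Du * Dv * (fu * gv - fv * gu)) := by
    nlinarith [hinst, hsqrt_nonneg, hsq]
  obtain ⟨x, hxdef⟩ : ∃ x : ℝ, x = (Du * gv + Dv * fu + β * gu * ℓ0) / (2 * (Du * Dv)) :=
    ⟨_, rfl⟩
  have hP : (0:ℝ) < Du * Dv := mul_pos hDu hDv
  have hx : 0 < x := by rw [hxdef]; positivity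
  have hx' : x * (2 * (Du * Dv)) = Du * gv + Dv * fu + β * gu * ℓ0 := by
    rw [hxdef]; field_simp
  have hk : (0:ℝ) < Real.sqrt x := Real.sqrt_pos.mpr hx
  have hk2 : Real.sqrt x ^ 2 = x := Real.sq_sqrt hx.le
  have hJ : Jk fu fv gu gv Du Dv β ℓ0 (Real.sqrt x)
      = !![fu - x * Du, fv + x * (β * ℓ0); gu, gv - x * Dv] := by
    simp only [Jk, hk2]
    ext i j
    fin_cases i <;> fin_cases j <;> simp <;> ring
  have hD : (fu - x * Du) * (gv - x * Dv) - (fv + x * (β * ℓ0)) * gu < 0 := by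
    have hE : ((fu - x * Du) * (gv - x * Dv) - (fv + x * (β * ℓ0)) * gu) * (4 * (Du * Dv))
        = 4 * (Du * Dv) * (fu * gv - fv * gu)
          - (Du * gv + Dv * fu + β * gu * ℓ0) ^ 2 := by
      linear_combination (x * (2 * (Du * Dv)) - (Du * gv + Dv * fu + β * gu * ℓ0)) * hx'
    nlinarith [hE, hP, hB2]
  obtain ⟨lam, hlam, v, hv, hev⟩ :=
    eig_of_negdet (fu - x * Du) (fv + x * (β * ℓ0)) gu (gv - x * Dv) hD
  exact ⟨Real.sqrt x, hk, lam, hlam, v, hv, by rw [hJ]; exact hev⟩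
end

section
/- (Range of unstable wavenumbers.) Assume f_u + g_v < 0, f_u·g_v − f_v·g_u > 0, and D_u·g_v + D_v·f_u + β·g_u·ℓ0 > 2·√(D_u·D_v·(f_u·g_v − f_v·g_u)). Set A = D_u·g_v + D_v·f_u, Δ = (A + β·g_u·ℓ0)² − 4·D_u·D_v·(f_u·g_v − f_v·g_u), k₁² = (A + β·g_u·ℓ0 − √Δ)/(2·D_u·D_v) and k₂² = (A + β·g_u·ℓ0 + √Δ)/(2·D_u·D_v). Then 0 < k₁² < k₂² and for every x > 0, h(x) < 0 if and only if k₁² < x < k₂². -/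
/-- The determinant-type polynomial `h` appearing in the dispersion relation. -/
noncomputable def hpoly (fu fv gu gv Du Dv β ℓ0 x : ℝ) : ℝ :=
  Du * Dv * x ^ 2 - (Du * gv + Dv * fu + β * gu * ℓ0) * x + (fu * gv - fv * gu)

set_option maxHeartbeats 1000000 in
/-- Range of unstable wavenumbers: under the Turing instability conditions, the
roots `k₁², k₂²` of `h` are positive, and `h(x) < 0` exactly for `k₁² < x < k₂²`. -/
theorem unstable_wavenumber_range
    (fu fv gu gv Du Dv β ℓ0 : ℝ) (hDu : 0 < Du) (hDv : 0 < Dv)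
    (htr : fu + gv < 0) (hdet : fu * gv - fv * gu > 0)
    (hinst : Du * gv + Dv * fu + β * gu * ℓ0 >
      2 * Real.sqrt (Du * Dv * (fu * gv - fv * gu))) :
    let A := Du * gv + Dv * fu
    let Δ := (A + β * gu * ℓ0) ^ 2 - 4 * Du * Dv * (fu * gv - fv * gu)
    let k1sq := (A + β * gu * ℓ0 - Real.sqrt Δ) / (2 * Du * Dv)
    let k2sq := (A + β * gu * ℓ0 + Real.sqrt Δ) / (2 * Du * Dv)
    0 < k1sq ∧ k1sq < k2sq ∧
      ∀ x : ℝ, 0 < x →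
        (hpoly fu fv gu gv Du Dv β ℓ0 x < 0 ↔ k1sq < x ∧ x < k2sq) := by
  intro A Δ k1sq k2sq
  set B := A + β * gu * ℓ0 with hBdef
  have ha : (0:ℝ) < Du * Dv := mul_pos hDu hDv
  have haC : (0:ℝ) ≤ Du * Dv * (fu * gv - fv * gu) := le_of_lt (mul_pos ha hdet)
  have hsq : Real.sqrt (Du * Dv * (fu * gv - fv * gu)) ^ 2
      = Du * Dv * (fu * gv - fv * gu) := Real.sq_sqrt haC
  have hsnn : 0 ≤ Real.sqrt (Du * Dv * (fu * gv - fv * gu)) := Real.sqrt_nonneg _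
  have hB : 0 < B := lt_of_le_of_lt (by linarith) hinst
  have hΔeq : Δ = B ^ 2 - 4 * Du * Dv * (fu * gv - fv * gu) := by
    simp only [Δ, hBdef]
  have hΔpos : 0 < Δ := by
    rw [hΔeq]; nlinarith
  have hsΔ : Real.sqrt Δ ^ 2 = B ^ 2 - 4 * Du * Dv * (fu * gv - fv * gu) := by
    rw [Real.sq_sqrt (le_of_lt hΔpos), hΔeq]
  have hsΔpos : 0 < Real.sqrt Δ := Real.sqrt_pos.mpr hΔpos
  have hsΔltB : Real.sqrt Δ < B := by nlinarith [hsΔ, hsΔpos]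
  have h2a : (0:ℝ) < 2 * Du * Dv := by linarith
  have hk1pos : 0 < k1sq := by
    apply div_pos _ h2a
    simp only [k1sq, ← hBdef] at *
    linarith
  have hk12 : k1sq < k2sq := by
    rw [div_lt_div_iff₀ h2a h2a]
    nlinarith
  refine ⟨hk1pos, hk12, ?_⟩
  have hid : ∀ x : ℝ, hpoly fu fv gu gv Du Dv β ℓ0 x
      = Du * Dv * ((x - k1sq) * (x - k2sq)) := by
    intro x
    have hBx : Du * gv + Dv * fu + β * gu * ℓ0 = B := by rw [hBdef]
    simp only [hpoly, k1sq, k2sq, hBx]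
    field_simp
    nlinarith [hsΔ]
  clear_value A Δ k1sq k2sq
  intro x hx
  rw [hid]
  constructor
  · intro h
    have hprod : (x - k1sq) * (x - k2sq) < 0 := by
      by_contra hc
      push_neg at hc
      exact absurd h (not_lt.mpr (mul_nonneg ha.le hc))
    constructor
    · by_contra hc
      push_neg at hc
      nlinarith [mul_nonneg (by linarith : (0:ℝ) ≤ k1sq - x)
        (by linarith : (0:ℝ) ≤ k2sq - x)]
    · by_contra hc
      push_neg at hc
      nlinarith [mul_nonneg (by linarith : (0:ℝ) ≤ x - k1sq)
        (by linarith : (0:ℝ) ≤ x - k2sq)]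
  · rintro ⟨h1, h2⟩
    exact mul_neg_of_pos_of_neg ha
      (mul_neg_of_pos_of_neg (by linarith) (by linarith))
end

section
/- (Maximum of the transient amplification envelope, complex eigenvalues.) Let a < 0 < b be real numbers and set t* = (1/b)·arctan(−b/a). Then 0 < t* < π/(2b) and for all t ≥ 0, e^{a·t}·|sin(b·t)| ≤ e^{a·t*}·sin(b·t*). -/
/-!
Writing `x = -b/a > 0` and `φ = arctan x = b·t*`, the derivative of `e^{at} sin(bt)` is
`-a·e^{at}·(x cos(bt) - sin(bt)) = -a·e^{at}·√(1+x²)·sin(φ - bt)`, so the function increases on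
`[0, t*]` and decreases on `[t*, π/b]`. For larger `t`, shifting `bt` down by a multiple of `π`
leaves `|sin(bt)|` unchanged and only increases `e^{at}`.
-/

open Real Set

theorem mul_cos_sub_sin_eq_sqrt_mul_sin (x θ : ℝ) :
    x * cos θ - sin θ = √(1 + x ^ 2) * sin (arctan x - θ) := by
  have hsqrt : √(1 + x ^ 2) ≠ 0 := by positivity
  rw [sin_sub, sin_arctan, cos_arctan]
  field_simp

theorem hasDerivAt_exp_mul_mul_sin_mul (a b t : ℝ) :
    HasDerivAt (fun t => exp (a * t) * sin (b * t))
      (exp (a * t) * (a * sin (b * t) + b * cos (b * t))) t := by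
  have hexp := ((hasDerivAt_id t).const_mul a).exp
  have hsin := ((hasDerivAt_id t).const_mul b).sin
  simp only [id, mul_one] at hexp hsin
  exact (hexp.mul hsin).congr_deriv (by ring)

theorem isMaxOn_Icc_of_hasDerivAt {f f' : ℝ → ℝ} {l m r : ℝ} (hf : ∀ x, HasDerivAt f (f' x) x)
    (hleft : ∀ x ∈ Ioo l m, 0 ≤ f' x) (hright : ∀ x ∈ Ioo m r, f' x ≤ 0) :
    IsMaxOn f (Icc l r) m := by
  have hcont : Continuous f := continuous_iff_continuousAt.2 fun x => (hf x).continuousAt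
  intro x ⟨hlx, hxr⟩
  rcases le_total x m with hxm | hmx
  · refine monotoneOn_of_hasDerivWithinAt_nonneg (convex_Icc l m) hcont.continuousOn
      (fun y _ => (hf y).hasDerivWithinAt) (by simpa only [interior_Icc] using hleft)
      ⟨hlx, hxm⟩ ⟨hlx.trans hxm, le_rfl⟩ hxm
  · refine antitoneOn_of_hasDerivWithinAt_nonpos (convex_Icc m r) hcont.continuousOn
      (fun y _ => (hf y).hasDerivWithinAt) (by simpa only [interior_Icc] using hright)
      ⟨le_rfl, hmx.trans hxr⟩ ⟨hmx, hxr⟩ hmx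

theorem exists_abs_sin_eq_sin {θ : ℝ} (hθ : 0 ≤ θ) : ∃ s ∈ Icc 0 π, s ≤ θ ∧ |sin θ| = sin s := by
  set n := ⌊θ / π⌋₊
  have hnθ : n * π ≤ θ := (le_div_iff₀ pi_pos).1 (Nat.floor_le (div_nonneg hθ pi_pos.le))
  have hθn : θ < (n + 1) * π := (div_lt_iff₀ pi_pos).1 (Nat.lt_floor_add_one _)
  have hs : θ - n * π ∈ Icc 0 π := ⟨by linarith, by linarith⟩
  refine ⟨θ - n * π, hs, by linarith [mul_nonneg n.cast_nonneg pi_pos.le], ?_⟩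
  rw [← sub_add_cancel θ (n * π), sin_add_nat_mul_pi, add_sub_cancel_right, abs_mul,
    abs_neg_one_pow, one_mul, abs_of_nonneg (sin_nonneg_of_nonneg_of_le_pi hs.1 hs.2)]

theorem isMaxOn_exp_mul_mul_sin_mul {a b : ℝ} (ha : a < 0) (hb : 0 < b) :
    IsMaxOn (fun t => exp (a * t) * sin (b * t)) (Icc 0 (π / b)) ((1 / b) * arctan (-b / a)) := by
  set φ := arctan (-b / a)
  have hφ₀ : 0 < φ := arctan_pos.2 (div_pos_of_neg_of_neg (neg_neg_of_pos hb) ha)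
  have hφ : φ < π / 2 := arctan_lt_pi_div_two _
  have hbφ : b * ((1 / b) * φ) = φ := by field_simp
  have hscale : ∀ t, 0 ≤ -a * exp (a * t) * √(1 + (-b / a) ^ 2) := fun t => by
    have : 0 < -a := neg_pos.2 ha
    positivity
  have hderiv : ∀ t, HasDerivAt (fun t => exp (a * t) * sin (b * t))
      (-a * exp (a * t) * √(1 + (-b / a) ^ 2) * sin (φ - b * t)) t := by
    intro t
    convert hasDerivAt_exp_mul_mul_sin_mul a b t using 1
    rw [mul_assoc _ √_, ← mul_cos_sub_sin_eq_sqrt_mul_sin]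
    field_simp [ha.ne]
    ring
  refine isMaxOn_Icc_of_hasDerivAt hderiv (fun t ⟨ht0, htφ⟩ => ?_) (fun t ⟨hφt, htπ⟩ => ?_)
  · have hbt := mul_lt_mul_of_pos_left htφ hb
    rw [hbφ] at hbt
    refine mul_nonneg (hscale t) (sin_nonneg_of_nonneg_of_le_pi (by linarith) ?_)
    nlinarith [pi_pos]
  · have hbt := mul_lt_mul_of_pos_left hφt hb
    rw [hbφ] at hbt
    have hbπ : b * t < π := (lt_div_iff₀' hb).1 htπ
    exact mul_nonpos_of_nonneg_of_nonpos (hscale t)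
      (sin_nonpos_of_nonpos_of_neg_pi_le (by linarith) (by linarith))

/-- Maximum of the transient amplification envelope for complex eigenvalues:
for `a < 0 < b` and `t* = b⁻¹·arctan(−b/a)`, we have `0 < t* < π/(2b)` and
`e^{at}|sin(bt)| ≤ e^{at*}·sin(bt*)` for all `t ≥ 0`. -/
theorem envelope_max_complex_eigenvalues (a b : ℝ) (ha : a < 0) (hb : 0 < b) :
    let tstar := (1 / b) * Real.arctan (-b / a)
    0 < tstar ∧ tstar < Real.pi / (2 * b) ∧
      ∀ t : ℝ, 0 ≤ t →
        Real.exp (a * t) * |Real.sin (b * t)| ≤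
          Real.exp (a * tstar) * Real.sin (b * tstar) := by
  intro tstar
  have hφ : 0 < arctan (-b / a) := arctan_pos.2 (div_pos_of_neg_of_neg (neg_neg_of_pos hb) ha)
  refine ⟨mul_pos (one_div_pos.2 hb) hφ, ?_, fun t ht => ?_⟩
  · rw [show π / (2 * b) = 1 / b * (π / 2) by ring]
    exact mul_lt_mul_of_pos_left (arctan_lt_pi_div_two _) (one_div_pos.2 hb)
  obtain ⟨s, ⟨hs0, hsπ⟩, hsbt, habs⟩ := exists_abs_sin_eq_sin (mul_nonneg hb.le ht)
  have hbs : b * (s / b) = s := mul_div_cancel₀ s hb.ne'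
  calc exp (a * t) * |sin (b * t)| = exp (a * t) * sin (b * (s / b)) := by rw [habs, hbs]
    _ ≤ exp (a * (s / b)) * sin (b * (s / b)) := by
      have hsin : 0 ≤ sin (b * (s / b)) := by rw [hbs]; exact sin_nonneg_of_nonneg_of_le_pi hs0 hsπ
      have hts : a * t ≤ a * (s / b) := mul_le_mul_of_nonpos_left ((div_le_iff₀' hb).2 hsbt) ha.le
      exact mul_le_mul_of_nonneg_right (exp_le_exp.2 hts) hsin
    _ ≤ exp (a * tstar) * sin (b * tstar) :=
      isMaxOn_exp_mul_mul_sin_mul ha hb ⟨div_nonneg hs0 hb.le, div_le_div_of_nonneg_right hsπ hb.le⟩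
end

section
/- (Linear stability of the positive MOMOS equilibrium.) Let k₁, k₂, q, c > 0 and let J₀ = [[−k₁ − 2√(c·q), k₂], [k₁, −k₂]] be the Jacobian of the MOMOS kinetics at P₀. Then det J₀ = 2·k₂·√(c·q) > 0 and trace J₀ = −2·√(c·q) − k₁ − k₂ < 0, and consequently every complex eigenvalue of J₀ has negative real part. -/
open Matrix

/-- Linear stability of the positive MOMOS equilibrium: the Jacobian
`J₀ = [[−k₁ − 2√(cq), k₂], [k₁, −k₂]]` has positive determinant `2k₂√(cq)` and
negative trace `−2√(cq) − k₁ − k₂`, hence every complex eigenvalue of `J₀` has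
negative real part. -/
theorem momos_linear_stability (k₁ k₂ q c : ℝ)
    (hk₁ : 0 < k₁) (hk₂ : 0 < k₂) (hq : 0 < q) (hc : 0 < c) :
    let J₀ : Matrix (Fin 2) (Fin 2) ℝ :=
      !![-k₁ - 2 * Real.sqrt (c * q), k₂; k₁, -k₂]
    (J₀.det = 2 * k₂ * Real.sqrt (c * q) ∧ 0 < J₀.det) ∧
    (J₀.trace = -2 * Real.sqrt (c * q) - k₁ - k₂ ∧ J₀.trace < 0) ∧
    ∀ (μ : ℂ) (v : Fin 2 → ℂ), v ≠ 0 →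
      (J₀.map (fun x : ℝ => (x : ℂ))).mulVec v = μ • v → μ.re < 0 := by
  intro J₀
  have hs : 0 < Real.sqrt (c * q) := Real.sqrt_pos.mpr (by positivity)
  have hdet : J₀.det = 2 * k₂ * Real.sqrt (c * q) := by
    simp [J₀, Matrix.det_fin_two_of]; ring
  have htr : J₀.trace = -2 * Real.sqrt (c * q) - k₁ - k₂ := by
    simp [J₀, Matrix.trace_fin_two_of]; ring
  refine ⟨⟨hdet, by rw [hdet]; positivity⟩, ⟨htr, by rw [htr]; nlinarith⟩, ?_⟩
  intro μ v hv hmv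
  have hv0 := congrFun hmv 0
  have hv1 := congrFun hmv 1
  simp [J₀, Matrix.mulVec, dotProduct, Fin.sum_univ_two, Matrix.map_apply] at hv0 hv1
  set x := v 0
  set y := v 1
  have hx : x ≠ 0 := by
    intro h0
    rw [h0] at hv0
    have hy : y = 0 := by
      have hk2 : (k₂ : ℂ) ≠ 0 := Complex.ofReal_ne_zero.mpr hk₂.ne'
      field_simp at hv0
      simpa [hk2] using hv0
    apply hv
    funext i
    fin_cases i <;> simp [h0, hy, x, y] at * <;> assumption
  have key : ((μ + k₂) * (μ + (k₁ + 2 * (Real.sqrt (c * q) : ℝ)))) * x = ((k₁ : ℂ) * k₂) * x := by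
    linear_combination -(μ + (k₂ : ℂ)) * hv0 - (k₂ : ℂ) * hv1
  have heq : (μ + k₂) * (μ + (k₁ + 2 * (Real.sqrt (c * q) : ℝ))) = (k₁ : ℂ) * k₂ :=
    mul_right_cancel₀ hx key
  rw [Complex.ext_iff] at heq
  obtain ⟨h1, h2⟩ := heq
  simp [Complex.mul_re, Complex.mul_im, Complex.add_re, Complex.add_im] at h1 h2
  rcases eq_or_ne μ.im 0 with hb | hb
  · rw [hb] at h1
    by_contra hge
    push_neg at hge
    nlinarith [hs, hk₁, hk₂, hge]
  · have h3 : μ.im * (2 * μ.re + k₂ + k₁ + 2 * Real.sqrt (c * q)) = 0 := by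
      linarith [h2]
    rcases mul_eq_zero.mp h3 with h | h
    · exact absurd h hb
    · linarith
end

section
/- (Reactivity of the MOMOS kinetics Jacobian.) Let k₁, k₂, q, c > 0 and J₀ = [[−k₁ − 2√(c·q), k₂], [k₁, −k₂]]. Then the symmetric part (J₀ + J₀ᵀ)/2 has a positive eigenvalue (J₀ is reactive) if and only if 8·k₂·√(c·q) < (k₁ − k₂)². -/
open Matrix

/-- Reactivity of the MOMOS kinetics Jacobian: `J₀` is reactive iff
`8·k₂·√(cq) < (k₁ − k₂)²`. -/
theorem momos_J0_reactive_iff (k₁ k₂ q c : ℝ)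
    (hk₁ : 0 < k₁) (hk₂ : 0 < k₂) (hq : 0 < q) (hc : 0 < c) :
    IsReactive !![-k₁ - 2 * Real.sqrt (c * q), k₂; k₁, -k₂] ↔
      8 * k₂ * Real.sqrt (c * q) < (k₁ - k₂) ^ 2 := by
  set s := Real.sqrt (c * q) with hs_def
  have hs : 0 < s := Real.sqrt_pos.mpr (mul_pos hc hq)
  clear_value s
  obtain ⟨a, ha_def⟩ : ∃ a : ℝ, a = -k₁ - 2 * s := ⟨_, rfl⟩
  obtain ⟨b, hb_def⟩ : ∃ b : ℝ, b = (k₁ + k₂) / 2 := ⟨_, rfl⟩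
  obtain ⟨d, hd_def⟩ : ∃ d : ℝ, d = -k₂ := ⟨_, rfl⟩
  have hsym : symPart !![-k₁ - 2 * s, k₂; k₁, -k₂] = !![a, b; b, d] := by
    subst ha_def hb_def hd_def
    ext i j
    fin_cases i <;> fin_cases j <;>
      simp [symPart, Matrix.add_apply, Matrix.transpose_apply,
        Matrix.vecHead, Matrix.vecTail] <;> ring
  have htr : a + d < 0 := by rw [ha_def, hd_def]; nlinarith
  have hb : b ≠ 0 := by rw [hb_def]; positivity
  constructor
  · rintro ⟨μ, hμ, v, hv, heq⟩
    rw [hsym] at heq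
    have h0 := congrFun heq 0
    have h1 := congrFun heq 1
    simp [Matrix.mulVec, dotProduct, Fin.sum_univ_two] at h0 h1
    have hchar : (a - μ) * (d - μ) = b * b := by
      have hv' : v 0 ≠ 0 ∨ v 1 ≠ 0 := by
        by_contra hcon
        push_neg at hcon
        apply hv
        funext i
        fin_cases i <;> simp [hcon.1, hcon.2]
      rcases hv' with hvi | hvi
      · have hz : ((a - μ) * (d - μ) - b * b) * v 0 = 0 := by nlinarith [h0, h1]
        have := (mul_eq_zero.mp hz).resolve_right hvi
        linarith
      · have hz : ((a - μ) * (d - μ) - b * b) * v 1 = 0 := by nlinarith [h0, h1]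
        have := (mul_eq_zero.mp hz).resolve_right hvi
        linarith
    have hdet : a * d < b * b := by nlinarith
    rw [ha_def, hb_def, hd_def] at hdet
    nlinarith
  · intro h
    have hdet : a * d < b * b := by
      rw [ha_def, hb_def, hd_def]; nlinarith
    obtain ⟨D, hD_def⟩ : ∃ D : ℝ, D = ((a - d) / 2) ^ 2 + b ^ 2 := ⟨_, rfl⟩
    have hD0 : 0 ≤ D := by rw [hD_def]; positivity
    obtain ⟨r, hr_def⟩ : ∃ r : ℝ, r = Real.sqrt D := ⟨_, rfl⟩
    have hr0 : 0 ≤ r := hr_def ▸ Real.sqrt_nonneg D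
    have hr2 : r ^ 2 = ((a - d) / 2) ^ 2 + b ^ 2 := by
      rw [hr_def, Real.sq_sqrt hD0, hD_def]
    obtain ⟨μ, hμ_def⟩ : ∃ μ : ℝ, μ = (a + d) / 2 + r := ⟨_, rfl⟩
    have hμpos : 0 < μ := by
      rw [hμ_def]
      nlinarith [hr2, hdet, hr0, sq_nonneg (r + (a + d) / 2)]
    have hchar : (μ - a) * (μ - d) = b ^ 2 := by
      rw [hμ_def]; linear_combination hr2
    refine ⟨μ, hμpos, ![b, μ - a], ?_, ?_⟩
    · intro hcontra
      have := congrFun hcontra 0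
      simp at this
      exact hb this
    · rw [hsym]
      funext i
      fin_cases i <;>
        simp [Matrix.mulVec, dotProduct, Fin.sum_univ_two,
          Matrix.vecHead, Matrix.vecTail]
      · linear_combination
      · linear_combination -hchar
end
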